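/- arXiv:1906.02488 — 2 statements merged into one kernel-verified Lean document; each statement's English description precedes it below -/
import Mathlib

section
/- Energy identity for the nonlinear delayed KdV–Burgers equation (identity (3.9) of Theorem 3.3, classical-solution form). Let τ > 0, λ₀, λ ∈ L^∞(ℝ), and let u be a classical solution with Schwartz decay of the delayed nonlinear equation ∂_t u + ∂_x³u − ∂_x²u + λ₀ u + λ u(·, t−τ) + u·∂_x u = 0. Then for all t ≥ 0: (1/2)∫_ℝ u(x,t)² dx + ∫₀^t ∫_ℝ (∂_x u(x,s))² dx ds + ∫₀^t ∫_ℝ λ₀(x)·u(x,s)² dx ds + ∫₀^t ∫_ℝ λ(x)·u(x, s−τ)·u(x,s) dx ds = (1/2)∫_ℝ u(x,0)² dx. -/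
/-!
Multiplying the equation by `u` and integrating in `x`, the dispersive term `∫ u u_xxx` and the
convective term `∫ u² u_x` vanish and `∫ u u_xx = -∫ u_x²` (integration by parts), so
`d/dt (½ ∫ u²) = -(∫ u_x² + ∫ λ₀ u² + ∫ λ u(·, t - τ) u)`. Differentiating under the integral
sign is legitimate because the equation itself bounds `∂ₜu(x, s)` by `C / (1 + x²)`, locally
uniformly in `s`: the curves `s ↦ ∂ₓᵏ u(s)` are continuous, hence locally bounded in the Schwartz
seminorms. Integrating this derivative from `0` to `t` gives the identity.
-/

open MeasureTheory SchwartzMap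

noncomputable def pd (v : 𝓢(ℝ, ℝ)) : 𝓢(ℝ, ℝ) := SchwartzMap.derivCLM ℝ ℝ v

open Filter Set Topology Metric

namespace SchwartzMap

instance {E F : Type*} [NormedAddCommGroup E] [NormedSpace ℝ E] [NormedAddCommGroup F]
    [NormedSpace ℝ F] : ContinuousEvalConst 𝓢(E, F) E F where
  continuous_eval_const x :=
    (continuous_eval_const (F := BoundedContinuousFunction E F) x).comp
      (toBoundedContinuousFunctionCLM ℝ E F).continuous

noncomputable def decaySeminorm : Seminorm ℝ 𝓢(ℝ, ℝ) :=
  SchwartzMap.seminorm ℝ 0 0 + SchwartzMap.seminorm ℝ 2 0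

theorem one_add_sq_mul_abs_le_decaySeminorm (f : 𝓢(ℝ, ℝ)) (x : ℝ) :
    (1 + x ^ 2) * |f x| ≤ decaySeminorm f := by
  have h0 := norm_le_seminorm ℝ f x
  have h2 := norm_pow_mul_le_seminorm ℝ f 2 x
  simp only [Real.norm_eq_abs, sq_abs] at h2
  rw [Real.norm_eq_abs] at h0
  simp only [decaySeminorm, FunLike.coe_add, Pi.add_apply]
  linarith

theorem abs_le_decaySeminorm (f : 𝓢(ℝ, ℝ)) (x : ℝ) : |f x| ≤ decaySeminorm f := by
  nlinarith [one_add_sq_mul_abs_le_decaySeminorm f x, abs_nonneg (f x), sq_nonneg x]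

@[fun_prop]
theorem continuous_decaySeminorm : Continuous decaySeminorm :=
  ((schwartz_withSeminorms ℝ ℝ ℝ).continuous_seminorm (0, 0)).add
    ((schwartz_withSeminorms ℝ ℝ ℝ).continuous_seminorm (2, 0))

theorem integrable_mul (f g : 𝓢(ℝ, ℝ)) : Integrable (fun x => f x * g x) :=
  (pairing (ContinuousLinearMap.mul ℝ ℝ) f g).integrable

theorem integrable_sq (f : 𝓢(ℝ, ℝ)) : Integrable (fun x => f x ^ 2) :=
  (integrable_mul f f).congr (ae_of_all _ fun x => (sq (f x)).symm)

end SchwartzMap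

@[fun_prop]
theorem continuous_pd : Continuous pd := (derivCLM ℝ ℝ).continuous

theorem hasDerivAt_pd (f : 𝓢(ℝ, ℝ)) (x : ℝ) : HasDerivAt f (pd f x) x := by
  simpa [pd] using f.differentiableAt.hasDerivAt

theorem MeasureTheory.MemLp.exists_ae_norm_le_of_top {α E : Type*} [MeasurableSpace α]
    {μ : Measure α} [NormedAddCommGroup E] {w : α → E} (hw : MemLp w ⊤ μ) :
    ∃ c, 0 ≤ c ∧ ∀ᵐ x ∂μ, ‖w x‖ ≤ c := by
  have h := hw.2
  rw [eLpNorm_exponent_top, eLpNormEssSup_lt_top_iff_isBoundedUnder] at h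
  obtain ⟨c, hc⟩ := h
  exact ⟨c, c.2, (eventually_map.1 hc).mono fun x hx => by exact_mod_cast hx⟩

theorem Continuous.forall_le_of_ae_le {X Y : Type*} [TopologicalSpace X] [MeasurableSpace X]
    {μ : Measure X} [μ.IsOpenPosMeasure] [TopologicalSpace Y] [LinearOrder Y]
    [OrderClosedTopology Y] {f : X → Y} (hf : Continuous f) {c : Y}
    (h : ∀ᵐ x ∂μ, f x ≤ c) (x : X) : f x ≤ c := by
  have hopen : IsOpen {x | c < f x} := isOpen_lt continuous_const hf
  have hnull : μ {x | c < f x} = 0 := by simpa [ae_iff] using h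
  have hempty := hopen.eq_empty_of_measure_zero hnull
  simpa using Set.eq_empty_iff_forall_notMem.1 hempty x

theorem continuous_integral_mul_mul {w : ℝ → ℝ} (hw : MemLp w ⊤ volume) :
    Continuous fun p : 𝓢(ℝ, ℝ) × 𝓢(ℝ, ℝ) => ∫ x, w x * p.1 x * p.2 x := by
  obtain ⟨c, hc, hwc⟩ := hw.exists_ae_norm_le_of_top
  refine continuous_iff_continuousAt.2 fun p₀ => ?_
  set A := decaySeminorm p₀.1 + 1
  set B := decaySeminorm p₀.2 + 1
  have hA : ∀ᶠ p : 𝓢(ℝ, ℝ) × 𝓢(ℝ, ℝ) in 𝓝 p₀, decaySeminorm p.1 ≤ A :=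
    ((continuous_decaySeminorm.comp continuous_fst).continuousAt.eventually_lt continuousAt_const
      (lt_add_one _)).mono fun _ h => h.le
  have hB : ∀ᶠ p : 𝓢(ℝ, ℝ) × 𝓢(ℝ, ℝ) in 𝓝 p₀, decaySeminorm p.2 ≤ B :=
    ((continuous_decaySeminorm.comp continuous_snd).continuousAt.eventually_lt continuousAt_const
      (lt_add_one _)).mono fun _ h => h.le
  refine continuousAt_of_dominated (bound := fun x => c * A * B * (1 + x ^ 2)⁻¹) ?_ ?_
    (integrable_inv_one_add_sq.const_mul _) ?_
  · exact Eventually.of_forall fun p =>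
      (hw.1.mul p.1.continuous.aestronglyMeasurable).mul p.2.continuous.aestronglyMeasurable
  · filter_upwards [hA, hB] with p hpA hpB
    filter_upwards [hwc] with x hx
    have h1 := (abs_le_decaySeminorm p.1 x).trans hpA
    have h2 : |p.2 x| ≤ B * (1 + x ^ 2)⁻¹ := by
      rw [← div_eq_mul_inv, le_div_iff₀ (by positivity), mul_comm]
      exact (one_add_sq_mul_abs_le_decaySeminorm p.2 x).trans hpB
    rw [Real.norm_eq_abs] at hx ⊢
    have hA0 : 0 ≤ A := (abs_nonneg _).trans h1
    calc |w x * p.1 x * p.2 x| = |w x| * |p.1 x| * |p.2 x| := by rw [abs_mul, abs_mul]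
      _ ≤ c * A * (B * (1 + x ^ 2)⁻¹) := by gcongr
      _ = c * A * B * (1 + x ^ 2)⁻¹ := by ring
  · exact Eventually.of_forall fun x =>
      ((continuous_const.mul ((continuous_eval_const x).comp continuous_fst)).mul
        ((continuous_eval_const x).comp continuous_snd)).continuousAt

theorem ContinuousOn.integral_mul_mul {X : Type*} [TopologicalSpace X] {S : Set X}
    {w : ℝ → ℝ} (hw : MemLp w ⊤ volume) {f g : X → 𝓢(ℝ, ℝ)} (hf : ContinuousOn f S)
    (hg : ContinuousOn g S) : ContinuousOn (fun a => ∫ x, w x * f a x * g a x) S :=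
  (continuous_integral_mul_mul hw).comp_continuousOn (hf.prodMk hg)

theorem ContinuousOn.integral_mul_sq {X : Type*} [TopologicalSpace X] {S : Set X}
    {w : ℝ → ℝ} (hw : MemLp w ⊤ volume) {f : X → 𝓢(ℝ, ℝ)} (hf : ContinuousOn f S) :
    ContinuousOn (fun a => ∫ x, w x * f a x ^ 2) S := by
  simpa only [sq, mul_assoc] using hf.integral_mul_mul hw hf

theorem hasDerivAt_integral_sq {u ut : ℝ → 𝓢(ℝ, ℝ)} {t A K : ℝ} {N : Set ℝ} (hN : N ∈ 𝓝 t)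
    (hu : ∀ s ∈ N, ∀ x, |u s x| ≤ A) (hut : ∀ s ∈ N, ∀ x, (1 + x ^ 2) * |ut s x| ≤ K)
    (hd : ∀ s ∈ N, ∀ x, HasDerivAt (fun s => u s x) (ut s x) s) :
    HasDerivAt (fun s => ∫ x, u s x ^ 2) (∫ x, 2 * u t x * ut t x) t := by
  refine (hasDerivAt_integral_of_dominated_loc_of_deriv_le
    (F' := fun s x => 2 * u s x * ut s x) (bound := fun x => 2 * A * K * (1 + x ^ 2)⁻¹) hN
    (Eventually.of_forall fun s => ((u s).continuous.pow 2).aestronglyMeasurable)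
    (integrable_sq (u t))
    ((continuous_const.mul (u t).continuous).mul (ut t).continuous).aestronglyMeasurable
    (ae_of_all _ fun x s hs => ?_) (integrable_inv_one_add_sq.const_mul _)
    (ae_of_all _ fun x s hs => ?_)).2
  · have hA0 : 0 ≤ A := (abs_nonneg _).trans (hu s hs x)
    have hK : |ut s x| ≤ K * (1 + x ^ 2)⁻¹ := by
      rw [← div_eq_mul_inv, le_div_iff₀ (by positivity), mul_comm]
      exact hut s hs x
    calc ‖2 * u s x * ut s x‖ = 2 * |u s x| * |ut s x| := by
          rw [Real.norm_eq_abs, abs_mul, abs_mul, abs_two]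
      _ ≤ 2 * A * (K * (1 + x ^ 2)⁻¹) := by gcongr; exact hu s hs x
      _ = 2 * A * K * (1 + x ^ 2)⁻¹ := by ring
  · exact ((hd s hs x).pow 2).congr_deriv (by ring)

theorem integral_mul_kdvBurgers_eq_integral_deriv_sq (v : 𝓢(ℝ, ℝ)) :
    ∫ x, v x * (pd (pd (pd v)) x - pd (pd v) x + v x * pd v x) = ∫ x, pd v x ^ 2 := by
  have hR : Integrable fun x => pd (pd (pd v)) x - pd (pd v) x + v x * pd v x :=
    ((pd (pd (pd v))).integrable.sub (pd (pd v)).integrable).add (integrable_mul v (pd v))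
  have hvR : Integrable fun x => v x * (pd (pd (pd v)) x - pd (pd v) x + v x * pd v x) :=
    hR.bdd_mul v.continuous.aestronglyMeasurable
      (ae_of_all _ fun x => abs_le_decaySeminorm v x)
  have hsq : Integrable fun x => pd v x ^ 2 := integrable_sq (pd v)
  have hG : ∀ x, HasDerivAt
      (fun y => v y * pd (pd v) y - pd v y ^ 2 / 2 - v y * pd v y + v y ^ 3 / 3)
      (v x * (pd (pd (pd v)) x - pd (pd v) x + v x * pd v x) - pd v x ^ 2) x := fun x =>
    (((((hasDerivAt_pd v x).mul (hasDerivAt_pd (pd (pd v)) x)).sub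
      (((hasDerivAt_pd (pd v) x).pow 2).div_const 2)).sub
      ((hasDerivAt_pd v x).mul (hasDerivAt_pd (pd v) x))).add
      (((hasDerivAt_pd v x).pow 3).div_const 3)).congr_deriv (by ring)
  have hcube : Integrable fun x => v x ^ 3 :=
    ((integrable_sq v).bdd_mul v.continuous.aestronglyMeasurable
      (ae_of_all _ fun x => abs_le_decaySeminorm v x)).congr (ae_of_all _ fun x => by ring)
  have hGint :
      Integrable fun y => v y * pd (pd v) y - pd v y ^ 2 / 2 - v y * pd v y + v y ^ 3 / 3 :=
    (((integrable_mul v _).sub ((integrable_sq _).div_const 2)).sub (integrable_mul v _)).add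
      (hcube.div_const 3)
  have h := integral_eq_zero_of_hasDerivAt_of_integrable hG (hvR.sub hsq) hGint
  rw [integral_sub hvR hsq] at h
  linarith

-- A solution satisfies `∂ₜ u t = -kdvBurgersOp l0 l (u t) (u (t - τ))`.
noncomputable def kdvBurgersOp (l0 l : ℝ → ℝ) (v w : 𝓢(ℝ, ℝ)) (x : ℝ) : ℝ :=
  pd (pd (pd v)) x - pd (pd v) x + l0 x * v x + l x * w x + v x * pd v x

theorem integral_mul_kdvBurgersOp {l0 l : ℝ → ℝ} (hl0 : MemLp l0 ⊤ volume)
    (hl : MemLp l ⊤ volume) (v w : 𝓢(ℝ, ℝ)) :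
    ∫ x, v x * kdvBurgersOp l0 l v w x
      = (∫ x, pd v x ^ 2) + (∫ x, l0 x * v x ^ 2) + ∫ x, l x * w x * v x := by
  have hN : Integrable fun x => v x * (pd (pd (pd v)) x - pd (pd v) x + v x * pd v x) :=
    (((pd (pd (pd v))).integrable.sub (pd (pd v)).integrable).add
      (integrable_mul v (pd v))).bdd_mul v.continuous.aestronglyMeasurable
      (ae_of_all _ fun x => abs_le_decaySeminorm v x)
  have h0 : Integrable fun x => l0 x * v x ^ 2 := (integrable_sq v).mul_of_top_right hl0
  have h1 : Integrable fun x => l x * w x * v x :=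
    ((integrable_mul w v).mul_of_top_right hl).congr (ae_of_all _ fun x => (mul_assoc _ _ _).symm)
  have hsplit : (fun x => v x * kdvBurgersOp l0 l v w x) = fun x =>
      v x * (pd (pd (pd v)) x - pd (pd v) x + v x * pd v x) + l0 x * v x ^ 2
        + l x * w x * v x := by
    funext x; simp only [kdvBurgersOp]; ring
  rw [hsplit, integral_add _ h1, integral_add hN h0, integral_mul_kdvBurgers_eq_integral_deriv_sq]
  exact hN.add h0

noncomputable def kdvBurgersBound (c0 c1 : ℝ) (v w : 𝓢(ℝ, ℝ)) : ℝ :=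
  decaySeminorm (pd (pd (pd v))) + decaySeminorm (pd (pd v)) + c0 * decaySeminorm v
    + c1 * decaySeminorm w + decaySeminorm v * decaySeminorm (pd v)

theorem continuous_kdvBurgersBound (c0 c1 : ℝ) :
    Continuous fun p : 𝓢(ℝ, ℝ) × 𝓢(ℝ, ℝ) => kdvBurgersBound c0 c1 p.1 p.2 := by
  unfold kdvBurgersBound; fun_prop

theorem ae_one_add_sq_mul_abs_kdvBurgersOp_le {l0 l : ℝ → ℝ} {c0 c1 : ℝ}
    (hl0 : ∀ᵐ x, |l0 x| ≤ c0) (hl : ∀ᵐ x, |l x| ≤ c1) (v w : 𝓢(ℝ, ℝ)) :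
    ∀ᵐ x, (1 + x ^ 2) * |kdvBurgersOp l0 l v w x| ≤ kdvBurgersBound c0 c1 v w := by
  filter_upwards [hl0, hl] with x hx0 hx1
  have hD : 0 ≤ 1 + x ^ 2 := by positivity
  have hc0 : 0 ≤ c0 := (abs_nonneg _).trans hx0
  have hc1 : 0 ≤ c1 := (abs_nonneg _).trans hx1
  have hdecay := one_add_sq_mul_abs_le_decaySeminorm
  have hnonlin : (1 + x ^ 2) * (|v x| * |pd v x|) ≤ decaySeminorm v * decaySeminorm (pd v) := by
    rw [mul_left_comm]
    exact mul_le_mul (abs_le_decaySeminorm v x) (hdecay _ x) (by positivity) (apply_nonneg _ _)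
  have htri : |kdvBurgersOp l0 l v w x| ≤ |pd (pd (pd v)) x| + |pd (pd v) x| + |l0 x| * |v x|
      + |l x| * |w x| + |v x| * |pd v x| := by
    simp only [kdvBurgersOp, ← abs_mul]
    refine abs_le.2 ⟨?_, ?_⟩ <;>
      linarith [neg_abs_le (pd (pd (pd v)) x), le_abs_self (pd (pd (pd v)) x),
        neg_abs_le (pd (pd v) x), le_abs_self (pd (pd v) x), neg_abs_le (l0 x * v x),
        le_abs_self (l0 x * v x), neg_abs_le (l x * w x), le_abs_self (l x * w x),
        neg_abs_le (v x * pd v x), le_abs_self (v x * pd v x)]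
  calc (1 + x ^ 2) * |kdvBurgersOp l0 l v w x|
      ≤ (1 + x ^ 2) * (|pd (pd (pd v)) x| + |pd (pd v) x| + |l0 x| * |v x|
        + |l x| * |w x| + |v x| * |pd v x|) := mul_le_mul_of_nonneg_left htri hD
    _ = (1 + x ^ 2) * |pd (pd (pd v)) x| + (1 + x ^ 2) * |pd (pd v) x|
        + |l0 x| * ((1 + x ^ 2) * |v x|) + |l x| * ((1 + x ^ 2) * |w x|)
        + (1 + x ^ 2) * (|v x| * |pd v x|) := by ring
    _ ≤ kdvBurgersBound c0 c1 v w := by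
      unfold kdvBurgersBound
      gcongr
      all_goals exact hdecay _ x

theorem hasDerivAt_integral_sq_of_kdvBurgers {τ : ℝ} (hτ : 0 ≤ τ) {l0 l : ℝ → ℝ}
    (hl0 : MemLp l0 ⊤ volume) (hl : MemLp l ⊤ volume) {u ut : ℝ → 𝓢(ℝ, ℝ)}
    (hu_cont : ContinuousOn u (Ici (-τ)))
    (hu_deriv : ∀ t > (0 : ℝ), ∀ x, HasDerivAt (fun s => u s x) (ut t x) t)
    (heq : ∀ t > (0 : ℝ), ∀ᵐ x, ut t x + kdvBurgersOp l0 l (u t) (u (t - τ)) x = 0)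
    {t : ℝ} (ht : 0 < t) :
    HasDerivAt (fun s => ∫ x, u s x ^ 2)
      (-2 * ((∫ x, pd (u t) x ^ 2) + (∫ x, l0 x * u t x ^ 2) + ∫ x, l x * u (t - τ) x * u t x))
      t := by
  obtain ⟨c0, -, hc0⟩ := hl0.exists_ae_norm_le_of_top
  obtain ⟨c1, -, hc1⟩ := hl.exists_ae_norm_le_of_top
  set N := closedBall t (t / 2)
  have hN : IsCompact N := isCompact_closedBall t (t / 2)
  have hNpos : ∀ s ∈ N, 0 < s := fun s hs => by
    rw [mem_closedBall, Real.dist_eq, abs_le] at hs; linarith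
  have hcurve : ContinuousOn (fun s => (u s, u (s - τ))) N :=
    (hu_cont.mono fun s hs => by simp only [mem_Ici]; linarith [hNpos s hs]).prodMk
      (hu_cont.comp (continuousOn_id.sub continuousOn_const) fun s hs => by
        simp only [mem_Ici]; linarith [hNpos s hs])
  obtain ⟨A, hA⟩ := hN.exists_bound_of_continuousOn
    (continuous_decaySeminorm.comp_continuousOn (continuous_fst.comp_continuousOn hcurve))
  obtain ⟨K, hK⟩ := hN.exists_bound_of_continuousOn
    ((continuous_kdvBurgersBound c0 c1).comp_continuousOn hcurve)
  -- the equation bounds `ut s` only almost everywhere, but `ut s` is continuous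
  have hut : ∀ s ∈ N, ∀ x, (1 + x ^ 2) * |ut s x| ≤ K := fun s hs =>
    Continuous.forall_le_of_ae_le (by fun_prop) <| by
      filter_upwards [heq s (hNpos s hs),
        ae_one_add_sq_mul_abs_kdvBurgersOp_le hc0 hc1 (u s) (u (s - τ))] with x hx hbound
      rw [eq_neg_of_add_eq_zero_left hx, abs_neg]
      exact hbound.trans ((le_abs_self _).trans (hK s hs))
  have hderiv := hasDerivAt_integral_sq (u := u) (closedBall_mem_nhds t (by linarith))
    (fun s hs x => (abs_le_decaySeminorm _ x).trans ((le_abs_self _).trans (hA s hs))) hut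
    (fun s hs => hu_deriv s (hNpos s hs))
  convert hderiv using 1
  calc -2 * ((∫ x, pd (u t) x ^ 2) + (∫ x, l0 x * u t x ^ 2) + ∫ x, l x * u (t - τ) x * u t x)
      = ∫ x, -2 * (u t x * kdvBurgersOp l0 l (u t) (u (t - τ)) x) := by
        rw [integral_const_mul, integral_mul_kdvBurgersOp hl0 hl]
    _ = ∫ x, 2 * u t x * ut t x := integral_congr_ae <| (heq t ht).mono fun x hx => by
        simp only [eq_neg_of_add_eq_zero_left hx]; ring

/-- Identity (3.9) of Theorem 3.3: energy identity for the nonlinear delayed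
KdV–Burgers equation. -/
theorem energy_identity_nonlinear_delayed
    (τ : ℝ) (hτ : 0 < τ)
    (l0 l : ℝ → ℝ)
    (hl0 : MemLp l0 ⊤ (volume : Measure ℝ)) (hl : MemLp l ⊤ (volume : Measure ℝ))
    (u ut : ℝ → 𝓢(ℝ, ℝ))
    (hu_cont : ContinuousOn u (Set.Ici (-τ)))
    (hu_deriv : ∀ t > (0 : ℝ), ∀ x : ℝ, HasDerivAt (fun s => u s x) (ut t x) t)
    (heq : ∀ t > (0 : ℝ), ∀ᵐ x : ℝ ∂(volume : Measure ℝ),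
      ut t x + pd (pd (pd (u t))) x - pd (pd (u t)) x
        + l0 x * u t x + l x * u (t - τ) x + u t x * pd (u t) x = 0) :
    ∀ t ≥ (0 : ℝ),
      (1 / 2) * (∫ x : ℝ, (u t x) ^ 2)
        + (∫ s in (0 : ℝ)..t, ∫ x : ℝ, (pd (u s) x) ^ 2)
        + (∫ s in (0 : ℝ)..t, ∫ x : ℝ, l0 x * (u s x) ^ 2)
        + (∫ s in (0 : ℝ)..t, ∫ x : ℝ, l x * u (s - τ) x * u s x)
      = (1 / 2) * ∫ x : ℝ, (u 0 x) ^ 2 := by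
  intro t ht
  have hu : ContinuousOn u (Icc 0 t) :=
    hu_cont.mono fun s hs => by simp only [mem_Ici]; linarith [hs.1]
  have hu_delay : ContinuousOn (fun s => u (s - τ)) (Icc 0 t) :=
    hu_cont.comp (continuousOn_id.sub continuousOn_const) fun s hs => by
      simp only [mem_Ici]; linarith [hs.1]
  have hE : ContinuousOn (fun s => ∫ x, u s x ^ 2) (Icc 0 t) := by
    simpa using hu.integral_mul_sq (memLp_top_const 1)
  have hdiss : ContinuousOn (fun s => ∫ x, pd (u s) x ^ 2) (Icc 0 t) := by
    simpa using (continuous_pd.comp_continuousOn hu).integral_mul_sq (memLp_top_const 1)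
  have hdamp := hu.integral_mul_sq hl0
  have hdelay := hu_delay.integral_mul_mul hl hu
  have hdiss_int := hdiss.intervalIntegrable_of_Icc (μ := volume) ht
  have hdamp_int := hdamp.intervalIntegrable_of_Icc (μ := volume) ht
  have hdelay_int := hdelay.intervalIntegrable_of_Icc (μ := volume) ht
  have hftc := intervalIntegral.integral_eq_sub_of_hasDerivAt_of_le ht hE
    (fun s hs => hasDerivAt_integral_sq_of_kdvBurgers hτ.le hl0 hl hu_cont hu_deriv
      (fun s hs => (heq s hs).mono fun x hx => by unfold kdvBurgersOp; linarith) hs.1)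
    (((hdiss_int.add hdamp_int).add hdelay_int).const_mul (-2))
  rw [intervalIntegral.integral_const_mul, intervalIntegral.integral_add _ hdelay_int,
    intervalIntegral.integral_add hdiss_int hdamp_int] at hftc
  · linarith
  · exact hdiss_int.add hdamp_int
end

section
/- Lipschitz estimate for the nonlinear term (Lemma 3.4, second part). Let T > 0 and let u, v : ℝ × [0, T] → ℝ be continuous, differentiable in the first variable with continuous spatial derivatives ∂_x u, ∂_x v, and such that for every t ∈ [0, T] the functions u(·,t), v(·,t), ∂_x u(·,t), ∂_x v(·,t) belong to L²(ℝ). Define ‖w‖_{𝓑_T} := sup_{t∈[0,T]} ‖w(·,t)‖₂ + ( ∫₀^T ‖∂_x w(·,t)‖₂² dt )^{1/2}, and assume ‖u‖_{𝓑_T} and ‖v‖_{𝓑_T} are finite. Then ∫₀^T ‖u(·,t)·∂_x u(·,t) − v(·,t)·∂_x v(·,t)‖₂ dt ≤ √2 · T^{1/4} · ( ‖u‖_{𝓑_T} + ‖v‖_{𝓑_T} ) · ‖u − v‖_{𝓑_T}. -/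
/-!
At a fixed time, a function `f ∈ H¹(ℝ)` obeys Agmon's inequality `‖f‖_∞² ≤ 2 ‖f‖₂ ‖f'‖₂`:
integrate `(f²)' = 2 f f'` from `x` to `+∞`, where `f²` vanishes. Splitting
`u u_x - v v_x = u (u_x - v_x) + (u - v) v_x` and bounding each first factor in `L^∞` gives, with
`w = u - v`,
`‖u u_x - v v_x‖₂ ≤ √(2 sup ‖u‖₂ ‖u_x‖₂) ‖w_x‖₂ + √(2 sup ‖w‖₂ ‖w_x‖₂) ‖v_x‖₂`.
In time, Cauchy–Schwarz applied twice gives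
`∫₀ᵀ √‖u_x‖₂ ‖w_x‖₂ ≤ T^{1/4} ‖u_x‖_{L²L²}^{1/2} ‖w_x‖_{L²L²}`, and `√(M √A) ≤ M + √A` turns
the products of the resulting factors into `𝓑_T` norms.
-/

open MeasureTheory

/-- The `L²(ℝ)` norm of a function. -/
noncomputable def L2norm (f : ℝ → ℝ) : ℝ := (eLpNorm f 2 volume).toReal

/-- The norm of the space `𝓑_T = C([0,T]; L²(ℝ)) ∩ L²(0,T; H¹(ℝ))`, for a function
`w x t` of the space variable `x` and time `t`, with spatial derivative `wx`. -/
noncomputable def BTnorm (T : ℝ) (w wx : ℝ → ℝ → ℝ) : ℝ :=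
  (⨆ t : Set.Icc (0 : ℝ) T, L2norm (fun x => w x t))
    + Real.sqrt (∫ t in (0 : ℝ)..T, (L2norm (fun x => wx x t)) ^ 2)

open Filter Set Topology

lemma L2norm_nonneg (f : ℝ → ℝ) : 0 ≤ L2norm f := ENNReal.toReal_nonneg

lemma L2norm_add_le {f g : ℝ → ℝ} (hf : MemLp f 2 volume) (hg : MemLp g 2 volume) :
    L2norm (fun x => f x + g x) ≤ L2norm f + L2norm g := by
  rw [L2norm, L2norm, L2norm, ← ENNReal.toReal_add hf.eLpNorm_ne_top hg.eLpNorm_ne_top]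
  exact ENNReal.toReal_mono (by finiteness [hf.eLpNorm_ne_top, hg.eLpNorm_ne_top])
    (eLpNorm_add_le hf.1 hg.1 one_le_two)

lemma L2norm_sub_le {f g : ℝ → ℝ} (hf : MemLp f 2 volume) (hg : MemLp g 2 volume) :
    L2norm (fun x => f x - g x) ≤ L2norm f + L2norm g := by
  rw [L2norm, L2norm, L2norm, ← ENNReal.toReal_add hf.eLpNorm_ne_top hg.eLpNorm_ne_top]
  exact ENNReal.toReal_mono (by finiteness [hf.eLpNorm_ne_top, hg.eLpNorm_ne_top])
    (eLpNorm_sub_le hf.1 hg.1 one_le_two)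

lemma L2norm_mul_le_of_abs_le {φ g : ℝ → ℝ} {M : ℝ} (hφ : ∀ x, |φ x| ≤ M)
    (hg : MemLp g 2 volume) :
    L2norm (fun x => φ x * g x) ≤ M * L2norm g := by
  have h := eLpNorm_le_mul_eLpNorm_of_ae_le_mul (μ := volume) (f := fun x => φ x * g x) (g := g)
    (c := M) (.of_forall fun x => by
      rw [norm_mul]; exact mul_le_mul_of_nonneg_right (hφ x) (norm_nonneg _)) 2
  have hM : 0 ≤ M := (abs_nonneg _).trans (hφ 0)
  rw [L2norm, L2norm, ← ENNReal.toReal_ofReal hM, ← ENNReal.toReal_mul]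
  exact ENNReal.toReal_mono (by finiteness [hg.eLpNorm_ne_top]) h

lemma integral_norm_mul_le_L2norm_mul_L2norm {f g : ℝ → ℝ} (hf : MemLp f 2 volume)
    (hg : MemLp g 2 volume) : ∫ x, ‖f x * g x‖ ≤ L2norm f * L2norm g := by
  have h := eLpNorm_smul_le_mul_eLpNorm (p := 2) (q := 2) (r := 1) hg.1 hf.1
  rw [integral_norm_eq_lintegral_enorm (f := fun x => f x * g x) (hf.1.mul hg.1),
    ← eLpNorm_one_eq_lintegral_enorm, L2norm, L2norm, ← ENNReal.toReal_mul]
  exact ENNReal.toReal_mono (by finiteness [hf.eLpNorm_ne_top, hg.eLpNorm_ne_top]) h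

lemma sq_le_two_mul_L2norm_mul_L2norm_deriv {f f' : ℝ → ℝ} (hd : ∀ x, HasDerivAt f (f' x) x)
    (hf : MemLp f 2 volume) (hf' : MemLp f' 2 volume) (x : ℝ) :
    f x ^ 2 ≤ 2 * (L2norm f * L2norm f') := by
  have hd2 : ∀ y, HasDerivAt (fun z => f z ^ 2) (2 * (f y * f' y)) y := fun y => by
    refine ((hd y).fun_pow' 2).congr_deriv ?_
    simp only [Finset.sum_range_succ, Finset.sum_range_zero, Nat.pred_eq_sub_one]
    ring
  have hint : Integrable (fun y => 2 * (f y * f' y)) := (hf.integrable_mul hf').const_mul 2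
  -- `f ^ 2` and its derivative are integrable, so `f ^ 2` vanishes at infinity
  have hlim : Tendsto (fun y => f y ^ 2) atTop (𝓝 0) :=
    tendsto_zero_of_hasDerivAt_of_integrableOn_Ioi (a := x) (fun y _ => hd2 y)
      hint.integrableOn hf.integrable_sq.integrableOn
  have hFTC : ∫ y in Ioi x, 2 * (f y * f' y) = 0 - f x ^ 2 :=
    integral_Ioi_of_hasDerivAt_of_tendsto' (fun y _ => hd2 y) hint.integrableOn hlim
  calc f x ^ 2 = -∫ y in Ioi x, 2 * (f y * f' y) := by rw [hFTC]; ring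
    _ ≤ ∫ y in Ioi x, |2 * (f y * f' y)| := by grw [neg_le_abs, abs_integral_le_integral_abs]
    _ ≤ ∫ y, |2 * (f y * f' y)| :=
        setIntegral_le_integral hint.abs (.of_forall fun _ => abs_nonneg _)
    _ = 2 * ∫ y, ‖f y * f' y‖ := by
        simp only [abs_mul, integral_const_mul, Real.norm_eq_abs]; norm_num
    _ ≤ 2 * (L2norm f * L2norm f') := by
        gcongr; exact integral_norm_mul_le_L2norm_mul_L2norm hf hf'

lemma abs_le_sqrt_two_mul_L2norm_mul_L2norm_deriv {f f' : ℝ → ℝ}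
    (hd : ∀ x, HasDerivAt f (f' x) x) (hf : MemLp f 2 volume) (hf' : MemLp f' 2 volume)
    (x : ℝ) : |f x| ≤ √(2 * (L2norm f * L2norm f')) :=
  Real.abs_le_sqrt (sq_le_two_mul_L2norm_mul_L2norm_deriv hd hf hf' x)

lemma memLp_top_of_hasDerivAt {f f' : ℝ → ℝ} (hd : ∀ x, HasDerivAt f (f' x) x)
    (hf : MemLp f 2 volume) (hf' : MemLp f' 2 volume) : MemLp f ⊤ volume :=
  memLp_top_of_bound
    (Differentiable.continuous fun x => (hd x).differentiableAt).aestronglyMeasurable _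
    (.of_forall (abs_le_sqrt_two_mul_L2norm_mul_L2norm_deriv hd hf hf'))

lemma L2norm_mul_le_of_hasDerivAt {f f' g : ℝ → ℝ} (hd : ∀ x, HasDerivAt f (f' x) x)
    (hf : MemLp f 2 volume) (hf' : MemLp f' 2 volume) (hg : MemLp g 2 volume) :
    L2norm (fun x => f x * g x) ≤ √(2 * (L2norm f * L2norm f')) * L2norm g :=
  L2norm_mul_le_of_abs_le (abs_le_sqrt_two_mul_L2norm_mul_L2norm_deriv hd hf hf') hg

lemma L2norm_mul_sub_mul_le {f f' g g' : ℝ → ℝ} (hfd : ∀ x, HasDerivAt f (f' x) x)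
    (hgd : ∀ x, HasDerivAt g (g' x) x) (hf : MemLp f 2 volume) (hf' : MemLp f' 2 volume)
    (hg : MemLp g 2 volume) (hg' : MemLp g' 2 volume) :
    L2norm (fun x => f x * f' x - g x * g' x)
      ≤ √(2 * (L2norm f * L2norm f')) * L2norm (fun x => f' x - g' x)
        + √(2 * (L2norm (fun x => f x - g x) * L2norm (fun x => f' x - g' x))) * L2norm g' := by
  have hwd : ∀ x, HasDerivAt (fun y => f y - g y) (f' x - g' x) x := fun x => (hfd x).sub (hgd x)
  have hw : MemLp (fun x => f x - g x) 2 volume := hf.sub hg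
  have hw' : MemLp (fun x => f' x - g' x) 2 volume := hf'.sub hg'
  have hdecomp : (fun x => f x * f' x - g x * g' x)
      = fun x => f x * (f' x - g' x) + (f x - g x) * g' x := by
    ext x; ring
  rw [hdecomp]
  exact (L2norm_add_le (hw'.mul' (memLp_top_of_hasDerivAt hfd hf hf'))
      (hg'.mul' (memLp_top_of_hasDerivAt hwd hw hw'))).trans
    (add_le_add (L2norm_mul_le_of_hasDerivAt hfd hf hf' hw')
      (L2norm_mul_le_of_hasDerivAt hwd hw hw' hg'))

lemma AEStronglyMeasurable.L2norm_slice {ν : Measure ℝ} [SFinite ν] {g : ℝ → ℝ → ℝ}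
    (hg : AEStronglyMeasurable (fun q : ℝ × ℝ => g q.1 q.2) (volume.prod ν)) :
    AEStronglyMeasurable (fun t => L2norm fun x => g x t) ν := by
  simp_rw [L2norm, eLpNorm_eq_lintegral_rpow_enorm_toReal two_ne_zero ENNReal.ofNat_ne_top]
  exact ((hg.enorm.pow_const _).lintegral_prod_left'.pow_const _).ennreal_toReal
    |>.aestronglyMeasurable

lemma ContinuousOn.aestronglyMeasurable_L2norm_slice {g : ℝ → ℝ → ℝ} {s : Set ℝ}
    (hs : MeasurableSet s) (hg : ContinuousOn (fun q : ℝ × ℝ => g q.1 q.2) (univ ×ˢ s)) :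
    AEStronglyMeasurable (fun t => L2norm fun x => g x t) (volume.restrict s) := by
  refine AEStronglyMeasurable.L2norm_slice ?_
  rw [← Measure.restrict_univ (μ := volume), Measure.prod_restrict]
  exact hg.aestronglyMeasurable (MeasurableSet.univ.prod hs)

section TimeIntegral

variable {α : Type*} [MeasurableSpace α] {μ : Measure α}

lemma memLp_two_sqrt {a : α → ℝ} (ha0 : 0 ≤ a) (ha : Integrable a μ) :
    MemLp (fun t => √(a t)) 2 μ := by
  refine (memLp_two_iff_integrable_sq (Real.continuous_sqrt.comp_aestronglyMeasurable ha.1)).2 ?_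
  simpa [Real.sq_sqrt (ha0 _)] using ha

lemma integral_mul_le_sqrt_mul_sqrt {f g : α → ℝ} (hf0 : 0 ≤ f) (hg0 : 0 ≤ g)
    (hf : MemLp f 2 μ) (hg : MemLp g 2 μ) :
    ∫ t, f t * g t ∂μ ≤ √(∫ t, f t ^ 2 ∂μ) * √(∫ t, g t ^ 2 ∂μ) := by
  have h := integral_mul_le_Lp_mul_Lq_of_nonneg Real.HolderConjugate.two_two
    (.of_forall hf0) (.of_forall hg0) (by simpa using hf) (by simpa using hg)
  simpa only [Real.rpow_two, Real.sqrt_eq_rpow, one_div] using h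

lemma integral_sqrt_mul_le [IsFiniteMeasure μ] {a c : α → ℝ} (ha0 : 0 ≤ a) (hc0 : 0 ≤ c)
    (ha : MemLp a 2 μ) (hc : MemLp c 2 μ) :
    ∫ t, √(a t) * c t ∂μ
      ≤ μ.real univ ^ (1 / 4 : ℝ) * √√(∫ t, a t ^ 2 ∂μ) * √(∫ t, c t ^ 2 ∂μ) := by
  have ha1 : ∫ t, a t ∂μ ≤ √(μ.real univ) * √(∫ t, a t ^ 2 ∂μ) := by
    simpa using integral_mul_le_sqrt_mul_sqrt (fun _ => zero_le_one) ha0 (memLp_const 1) ha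
  calc ∫ t, √(a t) * c t ∂μ ≤ √(∫ t, a t ∂μ) * √(∫ t, c t ^ 2 ∂μ) := by
        simpa [Real.sq_sqrt (ha0 _)] using
          integral_mul_le_sqrt_mul_sqrt (fun t => Real.sqrt_nonneg (a t)) hc0
            (memLp_two_sqrt ha0 (ha.integrable one_le_two)) hc
    _ ≤ √(√(μ.real univ) * √(∫ t, a t ^ 2 ∂μ)) * √(∫ t, c t ^ 2 ∂μ) := by gcongr
    _ = _ := by
        rw [Real.sqrt_mul (Real.sqrt_nonneg _), Real.sqrt_eq_rpow, Real.sqrt_eq_rpow,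
          ← Real.rpow_mul measureReal_nonneg]
        norm_num

lemma sqrt_mul_sqrt_le_add {x y : ℝ} (hx : 0 ≤ x) (hy : 0 ≤ y) : √x * √y ≤ x + y := by
  nlinarith [two_mul_le_add_sq √x √y, Real.sq_sqrt hx, Real.sq_sqrt hy,
    Real.sqrt_nonneg x, Real.sqrt_nonneg y]

lemma integral_le_of_le_sqrt_mul_add_sqrt_mul [IsFiniteMeasure μ] {F a b c : α → ℝ}
    {Mu Mv Mw : ℝ} (hMu : 0 ≤ Mu) (hMv : 0 ≤ Mv) (hMw : 0 ≤ Mw) (hF0 : 0 ≤ F) (ha0 : 0 ≤ a)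
    (hb0 : 0 ≤ b) (hc0 : 0 ≤ c) (ha : MemLp a 2 μ) (hb : MemLp b 2 μ) (hc : MemLp c 2 μ)
    (hF : ∀ᵐ t ∂μ, F t ≤ √(2 * (Mu * a t)) * c t + √(2 * (Mw * c t)) * b t) :
    ∫ t, F t ∂μ ≤ √2 * μ.real univ ^ (1 / 4 : ℝ) *
      ((Mu + √(∫ t, a t ^ 2 ∂μ)) + (Mv + √(∫ t, b t ^ 2 ∂μ))) * (Mw + √(∫ t, c t ^ 2 ∂μ)) := by
  set A := ∫ t, a t ^ 2 ∂μ
  set B := ∫ t, b t ^ 2 ∂μ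
  set C := ∫ t, c t ^ 2 ∂μ
  set τ := μ.real univ ^ (1 / 4 : ℝ)
  have hsplit : ∀ M x, 0 ≤ M → √(2 * (M * x)) = √(2 * M) * √x := fun M x hM => by
    rw [← mul_assoc, Real.sqrt_mul (by positivity)]
  have hac : Integrable (fun t => √(a t) * c t) μ :=
    (memLp_two_sqrt ha0 (ha.integrable one_le_two)).integrable_mul hc
  have hcb : Integrable (fun t => √(c t) * b t) μ :=
    (memLp_two_sqrt hc0 (hc.integrable one_le_two)).integrable_mul hb
  have hA := integral_sqrt_mul_le ha0 hc0 ha hc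
  have hC := integral_sqrt_mul_le hc0 hb0 hc hb
  have hAu : √(2 * Mu) * √√A ≤ √2 * (Mu + √A) := by
    rw [Real.sqrt_mul zero_le_two, mul_assoc]
    gcongr
    exact sqrt_mul_sqrt_le_add hMu (Real.sqrt_nonneg A)
  have hCw : √(2 * Mw) * √√C ≤ √2 * (Mw + √C) := by
    rw [Real.sqrt_mul zero_le_two, mul_assoc]
    gcongr
    exact sqrt_mul_sqrt_le_add hMw (Real.sqrt_nonneg C)
  calc ∫ t, F t ∂μ
      ≤ ∫ t, √(2 * Mu) * (√(a t) * c t) + √(2 * Mw) * (√(c t) * b t) ∂μ := by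
        refine integral_mono_of_nonneg (.of_forall hF0)
          ((hac.const_mul _).add (hcb.const_mul _)) ?_
        filter_upwards [hF] with t ht
        rwa [hsplit _ _ hMu, hsplit _ _ hMw, mul_assoc, mul_assoc] at ht
    _ = √(2 * Mu) * ∫ t, √(a t) * c t ∂μ + √(2 * Mw) * ∫ t, √(c t) * b t ∂μ := by
        rw [integral_add (hac.const_mul _) (hcb.const_mul _), integral_const_mul,
          integral_const_mul]
    _ ≤ √(2 * Mu) * (τ * √√A * √C) + √(2 * Mw) * (τ * √√C * √B) := by gcongr
    _ = τ * ((√(2 * Mu) * √√A) * √C + (√(2 * Mw) * √√C) * √B) := by ring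
    _ ≤ τ * ((√2 * (Mu + √A)) * (Mw + √C) + (√2 * (Mw + √C)) * (Mv + √B)) := by
        gcongr <;> linarith
    _ = _ := by ring

end TimeIntegral

lemma memLp_two_L2norm_slice {T : ℝ} (hT : 0 ≤ T) {g : ℝ → ℝ → ℝ}
    (hg : ContinuousOn (fun q : ℝ × ℝ => g q.1 q.2) (univ ×ˢ Icc 0 T))
    (hint : IntervalIntegrable (fun t => L2norm (fun x => g x t) ^ 2) volume 0 T) :
    MemLp (fun t => L2norm fun x => g x t) 2 (volume.restrict (Ioc 0 T)) :=
  (memLp_two_iff_integrable_sq ((hg.mono (prod_mono subset_rfl Ioc_subset_Icc_self))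
    |>.aestronglyMeasurable_L2norm_slice measurableSet_Ioc)).2
    ((intervalIntegrable_iff_integrableOn_Ioc_of_le hT).1 hint)

lemma memLp_two_L2norm_sub_slice {T : ℝ} {g h : ℝ → ℝ → ℝ}
    (hg_cont : ContinuousOn (fun q : ℝ × ℝ => g q.1 q.2) (univ ×ˢ Icc 0 T))
    (hh_cont : ContinuousOn (fun q : ℝ × ℝ => h q.1 q.2) (univ ×ˢ Icc 0 T))
    (hgL : ∀ t ∈ Icc 0 T, MemLp (fun x => g x t) 2 volume)
    (hhL : ∀ t ∈ Icc 0 T, MemLp (fun x => h x t) 2 volume)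
    (hg : MemLp (fun t => L2norm fun x => g x t) 2 (volume.restrict (Ioc 0 T)))
    (hh : MemLp (fun t => L2norm fun x => h x t) 2 (volume.restrict (Ioc 0 T))) :
    MemLp (fun t => L2norm fun x => g x t - h x t) 2 (volume.restrict (Ioc 0 T)) := by
  refine (hg.add hh).of_le (((hg_cont.sub hh_cont).mono
    (prod_mono subset_rfl Ioc_subset_Icc_self)).aestronglyMeasurable_L2norm_slice
    measurableSet_Ioc) ?_
  filter_upwards [ae_restrict_mem measurableSet_Ioc] with t ht
  have ht' := Ioc_subset_Icc_self ht
  rw [Real.norm_of_nonneg (L2norm_nonneg _)]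
  exact (L2norm_sub_le (hgL t ht') (hhL t ht')).trans (le_abs_self _)

lemma bddAbove_L2norm_sub_slice {s : Set ℝ} {g h : ℝ → ℝ → ℝ}
    (hgL : ∀ t ∈ s, MemLp (fun x => g x t) 2 volume)
    (hhL : ∀ t ∈ s, MemLp (fun x => h x t) 2 volume)
    (hg : BddAbove (range fun t : s => L2norm fun x => g x t))
    (hh : BddAbove (range fun t : s => L2norm fun x => h x t)) :
    BddAbove (range fun t : s => L2norm fun x => g x t - h x t) := by
  obtain ⟨Mg, hMg⟩ := hg
  obtain ⟨Mh, hMh⟩ := hh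
  refine ⟨Mg + Mh, forall_mem_range.2 fun t => ?_⟩
  exact (L2norm_sub_le (hgL t t.2) (hhL t t.2)).trans
    (add_le_add (hMg (mem_range_self t)) (hMh (mem_range_self t)))

theorem nonlinear_term_lipschitz_estimate_general
    (T : ℝ) (hT : 0 < T)
    (u ux v vx : ℝ → ℝ → ℝ)
    (hux_cont : ContinuousOn (fun q : ℝ × ℝ => ux q.1 q.2) (Set.univ ×ˢ Set.Icc 0 T))
    (hvx_cont : ContinuousOn (fun q : ℝ × ℝ => vx q.1 q.2) (Set.univ ×ˢ Set.Icc 0 T))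
    (hu_deriv : ∀ t ∈ Set.Icc (0 : ℝ) T, ∀ x : ℝ,
      HasDerivAt (fun y => u y t) (ux x t) x)
    (hv_deriv : ∀ t ∈ Set.Icc (0 : ℝ) T, ∀ x : ℝ,
      HasDerivAt (fun y => v y t) (vx x t) x)
    (hu_L2 : ∀ t ∈ Set.Icc (0 : ℝ) T, MemLp (fun x => u x t) 2 (volume : Measure ℝ))
    (hux_L2 : ∀ t ∈ Set.Icc (0 : ℝ) T, MemLp (fun x => ux x t) 2 (volume : Measure ℝ))
    (hv_L2 : ∀ t ∈ Set.Icc (0 : ℝ) T, MemLp (fun x => v x t) 2 (volume : Measure ℝ))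
    (hvx_L2 : ∀ t ∈ Set.Icc (0 : ℝ) T, MemLp (fun x => vx x t) 2 (volume : Measure ℝ))
    (hu_bdd : BddAbove (Set.range fun t : Set.Icc (0 : ℝ) T => L2norm (fun x => u x t)))
    (hv_bdd : BddAbove (Set.range fun t : Set.Icc (0 : ℝ) T => L2norm (fun x => v x t)))
    (hux_int : IntervalIntegrable (fun t => (L2norm (fun x => ux x t)) ^ 2) volume 0 T)
    (hvx_int : IntervalIntegrable (fun t => (L2norm (fun x => vx x t)) ^ 2) volume 0 T) :
    (∫ t in (0 : ℝ)..T, L2norm (fun x => u x t * ux x t - v x t * vx x t))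
      ≤ Real.sqrt 2 * T ^ ((1 : ℝ) / 4) * (BTnorm T u ux + BTnorm T v vx) *
          BTnorm T (fun x t => u x t - v x t) (fun x t => ux x t - vx x t) := by
  have hT0 : 0 ≤ T := hT.le
  have hw_bdd := bddAbove_L2norm_sub_slice hu_L2 hv_L2 hu_bdd hv_bdd
  have ha := memLp_two_L2norm_slice hT0 hux_cont hux_int
  have hb := memLp_two_L2norm_slice hT0 hvx_cont hvx_int
  have hc := memLp_two_L2norm_sub_slice hux_cont hvx_cont hux_L2 hvx_L2 ha hb
  have hτ : (volume.restrict (Ioc 0 T)).real univ = T := by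
    rw [measureReal_restrict_apply_univ, Real.volume_real_Ioc_of_le hT0, sub_zero]
  simp only [BTnorm, intervalIntegral.integral_of_le hT0]
  refine (integral_le_of_le_sqrt_mul_add_sqrt_mul (Real.iSup_nonneg fun _ => L2norm_nonneg _)
    (Real.iSup_nonneg fun _ => L2norm_nonneg _) (Real.iSup_nonneg fun _ => L2norm_nonneg _)
    (fun _ => L2norm_nonneg _) (fun _ => L2norm_nonneg _) (fun _ => L2norm_nonneg _)
    (fun _ => L2norm_nonneg _) ha hb hc ?_).trans_eq (by rw [hτ])
  filter_upwards [ae_restrict_mem measurableSet_Ioc] with t ht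
  have ht' := Ioc_subset_Icc_self ht
  refine (L2norm_mul_sub_mul_le (hu_deriv t ht') (hv_deriv t ht') (hu_L2 t ht') (hux_L2 t ht')
    (hv_L2 t ht') (hvx_L2 t ht')).trans ?_
  have hu_le := le_ciSup hu_bdd ⟨t, ht'⟩
  have hw_le := le_ciSup hw_bdd ⟨t, ht'⟩
  gcongr <;> exact L2norm_nonneg _

/-- Lemma 3.4, second part: Lipschitz estimate for the nonlinear term.
Here `u x t`, `v x t` denote values at the point `x ∈ ℝ` and time `t ∈ [0, T]`,
and `ux`, `vx` are the derivatives in the first (spatial) variable.  The boundedness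
and integrability hypotheses express that `‖u‖_{𝓑_T}` and `‖v‖_{𝓑_T}` are finite. -/
theorem nonlinear_term_lipschitz_estimate
    (T : ℝ) (hT : 0 < T)
    (u ux v vx : ℝ → ℝ → ℝ)
    (hu_cont : ContinuousOn (fun q : ℝ × ℝ => u q.1 q.2) (Set.univ ×ˢ Set.Icc 0 T))
    (hux_cont : ContinuousOn (fun q : ℝ × ℝ => ux q.1 q.2) (Set.univ ×ˢ Set.Icc 0 T))
    (hv_cont : ContinuousOn (fun q : ℝ × ℝ => v q.1 q.2) (Set.univ ×ˢ Set.Icc 0 T))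
    (hvx_cont : ContinuousOn (fun q : ℝ × ℝ => vx q.1 q.2) (Set.univ ×ˢ Set.Icc 0 T))
    (hu_deriv : ∀ t ∈ Set.Icc (0 : ℝ) T, ∀ x : ℝ,
      HasDerivAt (fun y => u y t) (ux x t) x)
    (hv_deriv : ∀ t ∈ Set.Icc (0 : ℝ) T, ∀ x : ℝ,
      HasDerivAt (fun y => v y t) (vx x t) x)
    (hu_L2 : ∀ t ∈ Set.Icc (0 : ℝ) T, MemLp (fun x => u x t) 2 (volume : Measure ℝ))
    (hux_L2 : ∀ t ∈ Set.Icc (0 : ℝ) T, MemLp (fun x => ux x t) 2 (volume : Measure ℝ))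
    (hv_L2 : ∀ t ∈ Set.Icc (0 : ℝ) T, MemLp (fun x => v x t) 2 (volume : Measure ℝ))
    (hvx_L2 : ∀ t ∈ Set.Icc (0 : ℝ) T, MemLp (fun x => vx x t) 2 (volume : Measure ℝ))
    (hu_bdd : BddAbove (Set.range fun t : Set.Icc (0 : ℝ) T => L2norm (fun x => u x t)))
    (hv_bdd : BddAbove (Set.range fun t : Set.Icc (0 : ℝ) T => L2norm (fun x => v x t)))
    (hux_int : IntervalIntegrable (fun t => (L2norm (fun x => ux x t)) ^ 2) volume 0 T)
    (hvx_int : IntervalIntegrable (fun t => (L2norm (fun x => vx x t)) ^ 2) volume 0 T) :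
    (∫ t in (0 : ℝ)..T, L2norm (fun x => u x t * ux x t - v x t * vx x t))
      ≤ Real.sqrt 2 * T ^ ((1 : ℝ) / 4) * (BTnorm T u ux + BTnorm T v vx) *
          BTnorm T (fun x t => u x t - v x t) (fun x t => ux x t - vx x t) :=
  nonlinear_term_lipschitz_estimate_general T hT u ux v vx hux_cont hvx_cont hu_deriv hv_deriv hu_L2
    hux_L2 hv_L2 hvx_L2 hu_bdd hv_bdd hux_int hvx_int
end
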